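/- For every n ≥ 0, the identity (Σ_{m≥0} ℓ_{m,n}·ξᵐ) · ∏_{1 ≤ k ≤ n+1, k ≡ t (mod 2)} (1 − [k]²·ξ²) = [n]!·ξⁿ holds in the formal power series ring ℚ(q)⟦ξ⟧. -/

import Mathlib

/-!
Setting: `K = ℚ(q)` is the field of rational functions over `ℚ`; `U⁻ = ℚ(q)[F]` and
`Uⁱ = ℚ(q)[B]` are both realized as `Polynomial K`, with `F` resp. `B` the variable
`Polynomial.X`.
-/

noncomputable section

abbrev K : Type := RatFunc ℚ

/-- The variable `q` of `ℚ(q)`. -/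
def q : K := RatFunc.X

/-- The quantum integer `[n] = (qⁿ - q⁻ⁿ)/(q - q⁻¹)`. -/
def qint (n : ℕ) : K := (q ^ n - q⁻¹ ^ n) / (q - q⁻¹)

/-- The quantum factorial `[n]! = [1][2]⋯[n]`, `[0]! = 1`. -/
def qfact : ℕ → K
  | 0 => 1
  | n + 1 => qfact n * qint (n + 1)

/-- The ı-canonical basis elements `Pₙ ∈ Uⁱ` (for the parameter `t ∈ {0,1}`): `P₀ = 1` and
`[n+1]·P_{n+1} = B·Pₙ − δ_{n≡t}·[n]·P_{n−1}` for `n ≥ 0`, interpreting `P₋₁ = 0`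
(for `n = 0` the last term vanishes as `[0] = 0`). -/
def Pel (t : ℕ) : ℕ → Polynomial K
  | 0 => 1
  | 1 => (qint 1)⁻¹ • (Polynomial.X : Polynomial K)
  | n + 2 => (qint (n + 2))⁻¹ •
      (Polynomial.X * Pel t (n + 1) -
        (if (n + 1) % 2 = t % 2 then qint (n + 1) else 0) • Pel t n)

lemma q_pow_ne_one (n : ℕ) (hn : n ≠ 0) : q ^ n ≠ 1 := by
  intro h
  have : (Polynomial.X : Polynomial ℚ) ^ n = 1 := by
    apply RatFunc.algebraMap_injective ℚ
    rw [map_pow, map_one, RatFunc.algebraMap_X]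
    exact h
  have := congrArg Polynomial.natDegree this
  simp [Polynomial.natDegree_X_pow] at this
  exact hn this

lemma q_ne_zero : q ≠ 0 := RatFunc.X_ne_zero

lemma sub_inv_ne_zero (a : K) (ha : a ≠ 0) (h2 : a ^ 2 ≠ 1) : a - a⁻¹ ≠ 0 := by
  intro h
  apply h2
  have : a = a⁻¹ := sub_eq_zero.mp h
  calc a ^ 2 = a * a := sq a
  _ = a * a⁻¹ := by rw [← this]
  _ = 1 := mul_inv_cancel₀ ha

lemma qden_ne_zero : q - q⁻¹ ≠ 0 := by
  apply sub_inv_ne_zero _ q_ne_zero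
  simpa using q_pow_ne_one 2 (by norm_num)

lemma qint_ne_zero (n : ℕ) (hn : n ≠ 0) : qint n ≠ 0 := by
  apply div_ne_zero _ qden_ne_zero
  rw [inv_pow]
  apply sub_inv_ne_zero _ (pow_ne_zero _ q_ne_zero)
  rw [← pow_mul]
  exact q_pow_ne_one _ (by omega)

lemma qint_zero : qint 0 = 0 := by simp [qint]

lemma qint_one : qint 1 = 1 := by
  simp only [qint, pow_one]
  exact div_self qden_ne_zero

lemma qfact_ne_zero (n : ℕ) : qfact n ≠ 0 := by
  induction n with
  | zero => simp [qfact]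
  | succ k ih => exact mul_ne_zero ih (qint_ne_zero _ (by omega))

lemma Pel_natDegree_le (t n : ℕ) : (Pel t n).natDegree ≤ n := by
  induction n using Nat.strong_induction_on with
  | _ n ih =>
    match n with
    | 0 => simp [Pel]
    | 1 =>
      refine le_trans (Polynomial.natDegree_smul_le _ _) ?_
      simp [Polynomial.natDegree_X]
    | (m + 2) =>
      refine le_trans (Polynomial.natDegree_smul_le _ _) ?_
      refine le_trans (Polynomial.natDegree_sub_le _ _) ?_
      rw [max_le_iff]
      constructor
      · refine le_trans (Polynomial.natDegree_mul_le) ?_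
        have := ih (m + 1) (by omega)
        simp only [Polynomial.natDegree_X]
        omega
      · refine le_trans (Polynomial.natDegree_smul_le _ _) ?_
        have := ih m (by omega)
        omega

lemma Pel_coeff_lt (t n k : ℕ) (h : n < k) : (Pel t n).coeff k = 0 :=
  Polynomial.coeff_eq_zero_of_natDegree_lt (lt_of_le_of_lt (Pel_natDegree_le t n) h)

lemma Pel_coeff_self (t n : ℕ) : (Pel t n).coeff n = (qfact n)⁻¹ := by
  induction n using Nat.strong_induction_on with
  | _ n ih =>
    match n with
    | 0 => simp [Pel, qfact]
    | 1 => simp [Pel, qfact, qint_one]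
    | (m + 2) =>
      have h1 := ih (m + 1) (by omega)
      simp only [Pel, Polynomial.coeff_smul, Polynomial.coeff_sub, Polynomial.coeff_X_mul,
        smul_eq_mul]
      rw [h1, Pel_coeff_lt t m (m + 2) (by omega), mul_zero, sub_zero,
        show qfact (m + 2) = qfact (m + 1) * qint (m + 2) from rfl, mul_inv, mul_comm]

lemma Pel_indep (t : ℕ) (N : ℕ) (a : ℕ → K)
    (h : ∑ k ∈ Finset.range N, a k • Pel t k = 0) : ∀ k < N, a k = 0 := by
  induction N with
  | zero => intro k hk; omega
  | succ M ih =>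
    have hcoeff := congrArg (fun p => Polynomial.coeff p M) h
    simp only [Polynomial.finset_sum_coeff, Polynomial.coeff_smul, smul_eq_mul,
      Polynomial.coeff_zero] at hcoeff
    rw [Finset.sum_range_succ] at hcoeff
    have hz : ∑ k ∈ Finset.range M, a k * (Pel t k).coeff M = 0 := by
      apply Finset.sum_eq_zero
      intro k hk
      rw [Pel_coeff_lt t k M (Finset.mem_range.mp hk), mul_zero]
    rw [hz, zero_add, Pel_coeff_self] at hcoeff
    have haM : a M = 0 := by
      rcases mul_eq_zero.mp hcoeff with h' | h'
      · exact h'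
      · exact absurd h' (inv_ne_zero (qfact_ne_zero M))
    have hrest : ∀ k < M, a k = 0 := by
      apply ih
      rw [Finset.sum_range_succ, haM, zero_smul, add_zero] at h
      exact h
    intro k hk
    rcases Nat.lt_succ_iff_lt_or_eq.mp hk with h' | h'
    · exact hrest k h'
    · rw [h']; exact haM

lemma X_mul_Pel (t n : ℕ) : Polynomial.X * Pel t n =
    qint (n + 1) • Pel t (n + 1) +
      (if n % 2 = t % 2 then qint n else 0) • Pel t (n - 1) := by
  match n with
  | 0 =>
    have : (if 0 % 2 = t % 2 then qint 0 else 0) = 0 := by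
      split <;> simp [qint_zero]
    rw [this, zero_smul, add_zero]
    show Polynomial.X * 1 = qint 1 • (qint 1)⁻¹ • (Polynomial.X : Polynomial K)
    rw [qint_one, mul_one]
    simp
  | (m + 1) =>
    show _ = qint (m + 2) • ((qint (m + 2))⁻¹ • _) + _
    rw [smul_smul, mul_inv_cancel₀ (qint_ne_zero _ (by omega)), one_smul]
    show _ = _ + (if (m + 1) % 2 = t % 2 then qint (m + 1) else 0) • Pel t m
    abel

section EllRec

variable {t : ℕ} {ℓ : ℕ → ℕ → K}
  (hl : ∀ m : ℕ,
    (Polynomial.X : Polynomial K) ^ m = ∑ n ∈ Finset.range (m + 1), ℓ m n • Pel t n)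
  (hl0 : ∀ m n : ℕ, m < n → ℓ m n = 0)

include hl hl0 in
lemma ell_zero (n : ℕ) : ℓ 0 n = if n = 0 then 1 else 0 := by
  rcases Nat.eq_zero_or_pos n with h | h
  · subst h
    have h0 := hl 0
    rw [pow_zero, Finset.sum_range_one] at h0
    have := congrArg (fun p => Polynomial.coeff p 0) h0
    simp only [Polynomial.coeff_one, if_pos rfl, Polynomial.coeff_smul, smul_eq_mul] at this
    rw [Pel_coeff_self] at this
    simp only [if_pos rfl]
    simpa [qfact] using this.symm
  · rw [if_neg (by omega)]
    exact hl0 0 n h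

include hl hl0 in
lemma ell_rec (m n : ℕ) : ℓ (m + 1) n =
    qint n * ℓ m (n - 1) +
      (if (n + 1) % 2 = t % 2 then qint (n + 1) else 0) * ℓ m (n + 1) := by
  set e : ℕ → K := fun j => if j % 2 = t % 2 then qint j else 0 with he
  have he0 : e 0 = 0 := by simp only [he]; split <;> simp [qint_zero]
  show ℓ (m + 1) n = qint n * ℓ m (n - 1) + e (n + 1) * ℓ m (n + 1)
  have S1 : ∑ j ∈ Finset.range (m + 1), (ℓ m j * qint (j + 1)) • Pel t (j + 1)
      = ∑ k ∈ Finset.range (m + 2), (qint k * ℓ m (k - 1)) • Pel t k := by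
    rw [Finset.sum_range_succ' (fun k => (qint k * ℓ m (k - 1)) • Pel t k) (m + 1)]
    rw [qint_zero, zero_mul, zero_smul, add_zero]
    exact Finset.sum_congr rfl (fun j _ => by rw [mul_comm, Nat.add_sub_cancel])
  have S2 : ∑ j ∈ Finset.range (m + 1), (ℓ m j * e j) • Pel t (j - 1)
      = ∑ k ∈ Finset.range (m + 2), (e (k + 1) * ℓ m (k + 1)) • Pel t k := by
    rw [Finset.sum_range_succ' (fun j => (ℓ m j * e j) • Pel t (j - 1)) m]
    rw [he0, mul_zero, zero_smul, add_zero]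
    rw [Finset.sum_range_succ (fun k => (e (k + 1) * ℓ m (k + 1)) • Pel t k) (m + 1)]
    rw [Finset.sum_range_succ (fun k => (e (k + 1) * ℓ m (k + 1)) • Pel t k) m]
    rw [hl0 m (m + 1) (by omega), hl0 m (m + 2) (by omega)]
    simp only [mul_zero, zero_smul, add_zero]
    exact Finset.sum_congr rfl (fun j _ => by rw [mul_comm, Nat.add_sub_cancel])
  have key : (Polynomial.X : Polynomial K) ^ (m + 1)
      = ∑ k ∈ Finset.range (m + 2),
          (qint k * ℓ m (k - 1) + e (k + 1) * ℓ m (k + 1)) • Pel t k := by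
    calc (Polynomial.X : Polynomial K) ^ (m + 1)
        = Polynomial.X * Polynomial.X ^ m := by ring
      _ = ∑ j ∈ Finset.range (m + 1), ℓ m j • (Polynomial.X * Pel t j) := by
          rw [hl m, Finset.mul_sum]
          exact Finset.sum_congr rfl (fun j _ => (mul_smul_comm _ _ _))
      _ = ∑ j ∈ Finset.range (m + 1),
            ((ℓ m j * qint (j + 1)) • Pel t (j + 1) + (ℓ m j * e j) • Pel t (j - 1)) := by
          refine Finset.sum_congr rfl (fun j _ => ?_)
          rw [X_mul_Pel, smul_add, smul_smul, smul_smul]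
      _ = (∑ j ∈ Finset.range (m + 1), (ℓ m j * qint (j + 1)) • Pel t (j + 1))
            + ∑ j ∈ Finset.range (m + 1), (ℓ m j * e j) • Pel t (j - 1) :=
          Finset.sum_add_distrib
      _ = _ := by rw [S1, S2, ← Finset.sum_add_distrib]
                  exact Finset.sum_congr rfl (fun k _ => (add_smul _ _ _).symm)
  have hdiff : ∑ k ∈ Finset.range (m + 2),
      (ℓ (m + 1) k - (qint k * ℓ m (k - 1) + e (k + 1) * ℓ m (k + 1))) • Pel t k = 0 := by
    simp only [sub_smul]
    rw [Finset.sum_sub_distrib, ← hl (m + 1), ← key, sub_self]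
  by_cases hn : n < m + 2
  · have := Pel_indep t (m + 2) _ hdiff n hn
    have h2 := sub_eq_zero.mp this
    exact h2
  · rw [hl0 (m + 1) n (by omega), hl0 m (n - 1) (by omega), hl0 m (n + 1) (by omega)]
    ring

end EllRec

section PS

variable {t : ℕ} {ℓ : ℕ → ℕ → K}
  (hl : ∀ m : ℕ,
    (Polynomial.X : Polynomial K) ^ m = ∑ n ∈ Finset.range (m + 1), ℓ m n • Pel t n)
  (hl0 : ∀ m n : ℕ, m < n → ℓ m n = 0)

include hl hl0 in
lemma G_rec (n : ℕ) : (PowerSeries.mk fun m => ℓ m n) =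
    PowerSeries.C (if n = 0 then 1 else 0) +
      PowerSeries.X * (PowerSeries.C (qint n) * PowerSeries.mk (fun m => ℓ m (n - 1)) +
        PowerSeries.C (if (n + 1) % 2 = t % 2 then qint (n + 1) else 0) *
          PowerSeries.mk (fun m => ℓ m (n + 1))) := by
  ext m
  cases m with
  | zero =>
    simp only [PowerSeries.coeff_mk, map_add, PowerSeries.coeff_zero_X_mul, add_zero,
      PowerSeries.coeff_zero_C]
    exact ell_zero hl hl0 n
  | succ m =>
    simp only [PowerSeries.coeff_mk, map_add, PowerSeries.coeff_succ_X_mul,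
      PowerSeries.coeff_C_mul, PowerSeries.coeff_C, if_neg (Nat.succ_ne_zero m), zero_add]
    exact ell_rec hl hl0 m n

include hl hl0 in
lemma G_R1 (n : ℕ) (hn : n % 2 = t % 2) : (PowerSeries.mk fun m => ℓ m n) =
    PowerSeries.C (if n = 0 then 1 else 0) +
      PowerSeries.X * (PowerSeries.C (qint n) * PowerSeries.mk (fun m => ℓ m (n - 1))) := by
  have h := G_rec hl hl0 n
  rw [if_neg (by omega : ¬ (n + 1) % 2 = t % 2)] at h
  rw [h, map_zero, zero_mul, add_zero]

include hl hl0 in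
lemma G_R2 (n : ℕ) (hn : ¬ n % 2 = t % 2) :
    (PowerSeries.mk fun m => ℓ m n) *
        (1 - PowerSeries.C (qint (n + 1) ^ 2) * PowerSeries.X ^ 2) =
      PowerSeries.C (if n = 0 then 1 else 0) +
        PowerSeries.X * (PowerSeries.C (qint n) * PowerSeries.mk (fun m => ℓ m (n - 1))) := by
  have h := G_rec hl hl0 n
  rw [if_pos (by omega : (n + 1) % 2 = t % 2)] at h
  have h1 := G_R1 hl hl0 (n + 1) (by omega)
  rw [if_neg (Nat.succ_ne_zero n), map_zero, zero_add, Nat.add_sub_cancel] at h1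
  rw [h1] at h
  have hC : PowerSeries.C (qint (n + 1) ^ 2) =
      PowerSeries.C (qint (n + 1)) * PowerSeries.C (qint (n + 1)) := by
    rw [← map_mul, sq]
  rw [hC]
  linear_combination h

end PS


/-- for every `n ≥ 0`, in `ℚ(q)⟦ξ⟧`:
`(Σ_{m≥0} ℓ_{m,n}·ξᵐ) · ∏_{1 ≤ k ≤ n+1, k ≡ t (mod 2)} (1 − [k]²·ξ²) = [n]!·ξⁿ`. -/
theorem stmt16 (t : ℕ) (ht : t = 0 ∨ t = 1) (ℓ : ℕ → ℕ → K)
    (hl : ∀ m : ℕ,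
      (Polynomial.X : Polynomial K) ^ m = ∑ n ∈ Finset.range (m + 1), ℓ m n • Pel t n)
    (hl0 : ∀ m n : ℕ, m < n → ℓ m n = 0) (n : ℕ) :
    (PowerSeries.mk fun m => ℓ m n) *
        ∏ k ∈ (Finset.Icc 1 (n + 1)).filter (fun k => k % 2 = t % 2),
          (1 - PowerSeries.C (qint k ^ 2) * PowerSeries.X ^ 2) =
      PowerSeries.C (qfact n) * PowerSeries.X ^ n := by
  induction n with
  | zero =>
    by_cases h0 : 0 % 2 = t % 2
    · have hset : (Finset.Icc 1 (0 + 1)).filter (fun k => k % 2 = t % 2) = ∅ := by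
        rw [Finset.Icc_self, Finset.filter_singleton, if_neg (by omega)]
      rw [hset, Finset.prod_empty, mul_one]
      have h := G_R1 hl hl0 0 h0
      rw [if_pos rfl, qint_zero, map_zero, zero_mul, mul_zero, add_zero] at h
      rw [h]
      simp [qfact]
    · have hset : (Finset.Icc 1 (0 + 1)).filter (fun k => k % 2 = t % 2) = {1} := by
        rw [Finset.Icc_self, Finset.filter_singleton, if_pos (by omega)]
      rw [hset, Finset.prod_singleton]
      have h := G_R2 hl hl0 0 h0
      rw [if_pos rfl, qint_zero, map_zero, zero_mul, mul_zero, add_zero] at h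
      rw [h]
      simp [qfact]
  | succ n ih =>
    have hq : PowerSeries.C (qfact (n + 1)) =
        PowerSeries.C (qfact n) * PowerSeries.C (qint (n + 1)) := by
      rw [← map_mul]; rfl
    by_cases hp : (n + 1) % 2 = t % 2
    · have hset : (Finset.Icc 1 (n + 1 + 1)).filter (fun k => k % 2 = t % 2)
          = (Finset.Icc 1 (n + 1)).filter (fun k => k % 2 = t % 2) := by
        rw [← Finset.insert_Icc_right_eq_Icc_add_one (by omega : 1 ≤ n + 1 + 1), Finset.filter_insert,
          if_neg (by omega)]
      have h := G_R1 hl hl0 (n + 1) hp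
      rw [if_neg (Nat.succ_ne_zero n), map_zero, zero_add, Nat.add_sub_cancel] at h
      rw [hset, h, mul_assoc, mul_assoc, ih, hq, pow_succ]
      ring
    · have hnm : (n + 1 + 1) ∉ (Finset.Icc 1 (n + 1)).filter (fun k => k % 2 = t % 2) := by
        simp only [Finset.mem_filter, Finset.mem_Icc]
        omega
      have hset : ∏ k ∈ (Finset.Icc 1 (n + 1 + 1)).filter (fun k => k % 2 = t % 2),
            (1 - PowerSeries.C (qint k ^ 2) * PowerSeries.X ^ 2)
          = (1 - PowerSeries.C (qint (n + 1 + 1) ^ 2) * PowerSeries.X ^ 2) *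
            ∏ k ∈ (Finset.Icc 1 (n + 1)).filter (fun k => k % 2 = t % 2),
              (1 - PowerSeries.C (qint k ^ 2) * PowerSeries.X ^ 2) := by
        rw [← Finset.insert_Icc_right_eq_Icc_add_one (by omega : 1 ≤ n + 1 + 1), Finset.filter_insert,
          if_pos (by omega), Finset.prod_insert hnm]
      have h := G_R2 hl hl0 (n + 1) hp
      rw [if_neg (Nat.succ_ne_zero n), map_zero, zero_add, Nat.add_sub_cancel] at h
      rw [hset, ← mul_assoc, h, mul_assoc, mul_assoc, ih, hq, pow_succ]
      ring

end
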